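/- Let (Ω, μ) be a finite measure space, 1 < p_i, q_i < ∞ (i = 1,2,3), θ ≥ 0. Suppose there are constants C₁, C₂ > 0 such that ‖uv‖_{p₃),θ} ≤ C₁‖u‖_{p₁),θ}‖v‖_{p₂),θ} and ‖uv‖_{q₃),θ} ≤ C₂‖u‖_{q₁),θ}‖v‖_{q₂),θ} for all appropriate u, v. Then for f ∈ W(L^{p₁),θ}, L^{q₁),θ}) and g ∈ W(L^{p₂),θ}, L^{q₂),θ}), the product fg lies in W(L^{p₃),θ}, L^{q₃),θ}) and ‖fg‖_{W(L^{p₃),θ},L^{q₃),θ})} ≤ C₁C₂ ‖f‖_{W(L^{p₁),θ},L^{q₁),θ})} ‖g‖_{W(L^{p₂),θ},L^{q₂),θ})}. -/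

import Mathlib

open MeasureTheory ENNReal Set Filter Topology Pointwise

noncomputable def eLp {Ω : Type*} [MeasurableSpace Ω] (μ : Measure Ω) (r : ℝ)
    (F : Ω → ℝ≥0∞) : ℝ≥0∞ :=
  (∫⁻ x, F x ^ r ∂μ) ^ (1 / r)

/-- The generalized grand Lebesgue norm of an `ℝ≥0∞`-valued function:
`sup_{0<ε≤p-1} ε^(θ/(p-ε)) ‖F‖_{p-ε}`. -/
noncomputable def gnorm {Ω : Type*} [MeasurableSpace Ω] (μ : Measure Ω) (p θ : ℝ)
    (F : Ω → ℝ≥0∞) : ℝ≥0∞ :=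
  ⨆ ε : Ioc (0:ℝ) (p - 1),
    ENNReal.ofReal ((ε : ℝ) ^ (θ / (p - (ε : ℝ)))) * eLp μ (p - (ε : ℝ)) F

/-- The grand Lebesgue norm `‖f‖_{p),θ}` of a real-valued function. -/
noncomputable def grandNorm {Ω : Type*} [MeasurableSpace Ω] (μ : Measure Ω) (p θ : ℝ)
    (f : Ω → ℝ) : ℝ≥0∞ :=
  gnorm μ p θ fun x => ENNReal.ofReal |f x|

/-- Classical Wiener amalgam norm `‖x ↦ ‖f·χ_{Q+x}‖_r‖_s`. -/
noncomputable def wnorm (μ : Measure ℝ) (Q : Set ℝ) (r s : ℝ) (f : ℝ → ℝ) : ℝ≥0∞ :=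
  eLp μ s fun x => eLp μ r ((x +ᵥ Q).indicator fun t => ENNReal.ofReal |f t|)

/-- Grand Wiener amalgam norm `‖x ↦ ‖f·χ_{Q+x}‖_{p),θ}‖_{q),θ}`. -/
noncomputable def wgnorm (μ : Measure ℝ) (Q : Set ℝ) (p q θ : ℝ) (f : ℝ → ℝ) : ℝ≥0∞ :=
  gnorm μ q θ fun x => gnorm μ p θ ((x +ᵥ Q).indicator fun t => ENNReal.ofReal |f t|)

section Aux

variable {Ω : Type*} [MeasurableSpace Ω] (μ : Measure Ω)

lemma eLp_mono {r : ℝ} (hr : 0 ≤ r) {F G : Ω → ℝ≥0∞} (h : ∀ x, F x ≤ G x) :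
    eLp μ r F ≤ eLp μ r G :=
  ENNReal.rpow_le_rpow (lintegral_mono fun x => ENNReal.rpow_le_rpow (h x) hr)
    (by positivity)

lemma gnorm_mono (p θ : ℝ) {F G : Ω → ℝ≥0∞} (h : ∀ x, F x ≤ G x) :
    gnorm μ p θ F ≤ gnorm μ p θ G := by
  refine iSup_mono fun ε => mul_le_mul_right (eLp_mono μ ?_ h) _
  have h2 := ε.2.2
  linarith

lemma eLp_const_mul {c : ℝ≥0∞} (hc : c ≠ ∞) {r : ℝ} (hr : 0 < r) (F : Ω → ℝ≥0∞) :
    eLp μ r (fun x => c * F x) = c * eLp μ r F := by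
  unfold eLp
  have h1 : ∀ x, (c * F x) ^ r = c ^ r * F x ^ r := fun x =>
    ENNReal.mul_rpow_of_nonneg _ _ hr.le
  simp only [h1]
  rw [lintegral_const_mul' _ _ (ENNReal.rpow_ne_top_of_nonneg hr.le hc),
    ENNReal.mul_rpow_of_nonneg _ _ (by positivity : (0:ℝ) ≤ 1 / r),
    ← ENNReal.rpow_mul, mul_one_div_cancel hr.ne', ENNReal.rpow_one]

lemma gnorm_const_mul_le {c : ℝ≥0∞} (hc : c ≠ ∞) (p θ : ℝ) (F : Ω → ℝ≥0∞) :
    gnorm μ p θ (fun x => c * F x) ≤ c * gnorm μ p θ F := by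
  refine iSup_le fun ε => ?_
  have hr : 0 < p - (ε : ℝ) := by have h2 := ε.2.2; have h1 := ε.2.1; linarith
  rw [eLp_const_mul μ hc hr]
  calc ENNReal.ofReal ((ε : ℝ) ^ (θ / (p - (ε : ℝ)))) * (c * eLp μ (p - (ε : ℝ)) F)
      = c * (ENNReal.ofReal ((ε : ℝ) ^ (θ / (p - (ε : ℝ)))) * eLp μ (p - (ε : ℝ)) F) := by
        ring
    _ ≤ c * gnorm μ p θ F := mul_le_mul_right (le_iSup (fun ε : Ioc (0:ℝ) (p-1) =>
        ENNReal.ofReal ((ε : ℝ) ^ (θ / (p - (ε : ℝ)))) * eLp μ (p - (ε : ℝ)) F) ε) _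

lemma gnorm_trunc (p θ : ℝ) (H : Ω → ℝ≥0∞) :
    gnorm μ p θ H ≤ ⨆ n : ℕ, gnorm μ p θ (fun x => min (H x) n) := by
  refine iSup_le fun ε => ?_
  set r : ℝ := p - (ε : ℝ) with hrdef
  have hr : 1 ≤ r := by have h2 := ε.2.2; simp only [hrdef]; linarith
  have hr0 : 0 < r := lt_of_lt_of_le one_pos hr
  have key : (∫⁻ x, H x ^ r ∂μ) ≤ ⨆ n : ℕ, ∫⁻ x, (min (H x) ((n : ℝ≥0∞))) ^ r ∂μ := by
    rw [lintegral_eq_nnreal (fun x => H x ^ r) μ]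
    refine iSup₂_le fun φ hφ => ?_
    obtain ⟨m, hm⟩ := φ.exists_forall_le
    obtain ⟨n, hn⟩ := exists_nat_ge m
    refine le_iSup_of_le (n + 1) ?_
    rw [← SimpleFunc.lintegral_eq_lintegral]
    refine lintegral_mono fun x => ?_
    have hmono : Monotone (fun z : ℝ≥0∞ => z ^ r) := fun a b hab =>
      ENNReal.rpow_le_rpow hab hr0.le
    rw [show min (H x) (((n:ℕ) + 1 : ℕ) : ℝ≥0∞) ^ r
        = min (H x ^ r) ((((n:ℕ) + 1 : ℕ) : ℝ≥0∞) ^ r) from hmono.map_min]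
    refine le_min ?_ ?_
    · simpa using hφ x
    · calc ((φ.map ((↑) : NNReal → ℝ≥0∞)) x) = ((φ x : NNReal) : ℝ≥0∞) := by simp
        _ ≤ ((m : NNReal) : ℝ≥0∞) := by exact_mod_cast hm x
        _ ≤ (((n:ℕ) + 1 : ℕ) : ℝ≥0∞) := by
            rw [show (((n:ℕ) + 1 : ℕ) : ℝ≥0∞) = (((n + 1 : ℕ) : NNReal) : ℝ≥0∞) by simp]
            exact_mod_cast hn.trans (by exact_mod_cast Nat.le_succ n)
        _ = (((n:ℕ) + 1 : ℕ) : ℝ≥0∞) ^ (1:ℝ) := by rw [ENNReal.rpow_one]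
        _ ≤ (((n:ℕ) + 1 : ℕ) : ℝ≥0∞) ^ r := by
            refine ENNReal.rpow_le_rpow_of_exponent_le ?_ hr
            exact_mod_cast Nat.one_le_iff_ne_zero.mpr (Nat.succ_ne_zero n)
  have key2 : (∫⁻ x, H x ^ r ∂μ) ^ (1/r) ≤
      ⨆ n : ℕ, (∫⁻ x, (min (H x) ((n : ℝ≥0∞))) ^ r ∂μ) ^ (1/r) := by
    set s := ⨆ n : ℕ, (∫⁻ x, (min (H x) ((n : ℝ≥0∞))) ^ r ∂μ) ^ (1/r) with hs
    have h1 : ∀ n : ℕ, (∫⁻ x, (min (H x) ((n : ℝ≥0∞))) ^ r ∂μ) ≤ s ^ r := by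
      intro n
      have : (∫⁻ x, (min (H x) ((n : ℝ≥0∞))) ^ r ∂μ)
          = ((∫⁻ x, (min (H x) ((n : ℝ≥0∞))) ^ r ∂μ) ^ (1/r)) ^ r := by
        rw [← ENNReal.rpow_mul, one_div_mul_cancel hr0.ne', ENNReal.rpow_one]
      rw [this]
      refine ENNReal.rpow_le_rpow ?_ hr0.le
      rw [hs]
      exact le_iSup (fun n : ℕ => (∫⁻ x, (min (H x) ((n : ℝ≥0∞))) ^ r ∂μ) ^ (1/r)) n
    calc (∫⁻ x, H x ^ r ∂μ) ^ (1/r) ≤ (⨆ n : ℕ, ∫⁻ x, (min (H x) ((n : ℝ≥0∞))) ^ r ∂μ) ^ (1/r) :=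
          ENNReal.rpow_le_rpow key (by positivity)
      _ ≤ (s ^ r) ^ (1/r) := ENNReal.rpow_le_rpow (iSup_le h1) (by positivity)
      _ = s := by rw [← ENNReal.rpow_mul, mul_one_div_cancel hr0.ne', ENNReal.rpow_one]
  calc ENNReal.ofReal ((ε : ℝ) ^ (θ / r)) * eLp μ r H
      ≤ ENNReal.ofReal ((ε : ℝ) ^ (θ / r)) *
        ⨆ n : ℕ, (∫⁻ x, (min (H x) ((n : ℝ≥0∞))) ^ r ∂μ) ^ (1/r) :=
        mul_le_mul_right key2 _
    _ = ⨆ n : ℕ, ENNReal.ofReal ((ε : ℝ) ^ (θ / r)) *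
        (∫⁻ x, (min (H x) ((n : ℝ≥0∞))) ^ r ∂μ) ^ (1/r) := by
        rw [ENNReal.mul_iSup]
    _ ≤ ⨆ n : ℕ, gnorm μ p θ (fun x => min (H x) n) := by
        refine iSup_mono fun n => ?_
        exact le_iSup (fun ε : Ioc (0:ℝ) (p-1) =>
          ENNReal.ofReal ((ε : ℝ) ^ (θ / (p - (ε : ℝ)))) *
            eLp μ (p - (ε : ℝ)) (fun x => min (H x) n)) ε

end Aux

/-- first coordinate of a truncated pair dominating `min (F x * G x) K`. -/
noncomputable def tu (F G : ℝ → ℝ≥0∞) (K : ℝ≥0∞) (x : ℝ) : ℝ :=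
  if F x ≠ ∞ then (F x).toReal
  else if G x = ∞ then Real.sqrt K.toReal
  else (K / G x).toReal

noncomputable def tv (F G : ℝ → ℝ≥0∞) (K : ℝ≥0∞) (x : ℝ) : ℝ :=
  if G x ≠ ∞ then (G x).toReal
  else if F x = ∞ then Real.sqrt K.toReal
  else (K / F x).toReal

lemma tu_nonneg (F G : ℝ → ℝ≥0∞) (K : ℝ≥0∞) (x : ℝ) : 0 ≤ tu F G K x := by
  unfold tu; split_ifs <;> first | exact ENNReal.toReal_nonneg | exact Real.sqrt_nonneg _

lemma tv_nonneg (F G : ℝ → ℝ≥0∞) (K : ℝ≥0∞) (x : ℝ) : 0 ≤ tv F G K x := by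
  unfold tv; split_ifs <;> first | exact ENNReal.toReal_nonneg | exact Real.sqrt_nonneg _

lemma tu_le (F G : ℝ → ℝ≥0∞) (K : ℝ≥0∞) (x : ℝ) :
    ENNReal.ofReal (tu F G K x) ≤ F x := by
  unfold tu
  by_cases hF : F x = ∞
  · simp [hF]
  · simp [hF, ENNReal.ofReal_toReal hF]

lemma tv_le (F G : ℝ → ℝ≥0∞) (K : ℝ≥0∞) (x : ℝ) :
    ENNReal.ofReal (tv F G K x) ≤ G x := by
  unfold tv
  by_cases hG : G x = ∞
  · simp [hG]
  · simp [hG, ENNReal.ofReal_toReal hG]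

lemma tuv_key (F G : ℝ → ℝ≥0∞) {K : ℝ≥0∞} (hK : K ≠ ∞) (x : ℝ) :
    min (F x * G x) K ≤ ENNReal.ofReal (tu F G K x) * ENNReal.ofReal (tv F G K x) := by
  by_cases hF : F x = ∞ <;> by_cases hG : G x = ∞
  · -- both infinite : product is K
    simp only [tu, tv, hF, hG, if_pos rfl, ne_eq, not_true_eq_false, if_false, if_true]
    rw [← ENNReal.ofReal_mul (Real.sqrt_nonneg _), Real.mul_self_sqrt ENNReal.toReal_nonneg,
      ENNReal.ofReal_toReal hK]
    exact min_le_right _ _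
  · -- F = ∞, G finite
    by_cases hG0 : G x = 0
    · simp [hF, hG0]
    · have h1 : tu F G K x = (K / G x).toReal := by simp [tu, hF, hG]
      have h2 : tv F G K x = (G x).toReal := by simp [tv, hG]
      rw [h1, h2, ENNReal.ofReal_toReal (ENNReal.div_lt_top hK hG0).ne,
        ENNReal.ofReal_toReal hG, ENNReal.div_mul_cancel hG0 hG]
      exact min_le_right _ _
  · -- F finite, G = ∞
    by_cases hF0 : F x = 0
    · simp [hG, hF0]
    · have h1 : tu F G K x = (F x).toReal := by simp [tu, hF]
      have h2 : tv F G K x = (K / F x).toReal := by simp [tv, hG, hF]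
      rw [h1, h2, ENNReal.ofReal_toReal hF,
        ENNReal.ofReal_toReal (ENNReal.div_lt_top hK hF0).ne,
        ENNReal.mul_div_cancel hF0 hF]
      exact min_le_right _ _
  · have h1 : tu F G K x = (F x).toReal := by simp [tu, hF]
    have h2 : tv F G K x = (G x).toReal := by simp [tv, hG]
    rw [h1, h2, ENNReal.ofReal_toReal hF, ENNReal.ofReal_toReal hG]
    exact min_le_left _ _

lemma indicator_abs_swap (s : Set ℝ) (h : ℝ → ℝ) :
    (fun t => ENNReal.ofReal |s.indicator h t|) =
      s.indicator fun t => ENNReal.ofReal |h t| := by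
  funext t
  by_cases ht : t ∈ s <;> simp [ht]

lemma indicator_mul_split (s : Set ℝ) (f g : ℝ → ℝ) :
    s.indicator (f * g) = s.indicator f * s.indicator g := by
  funext t
  by_cases ht : t ∈ s <;> simp [ht]

theorem stmt14 (μ : Measure ℝ) [IsFiniteMeasure μ] (Q : Set ℝ)
    (hQ : IsCompact Q) (hQ' : (interior Q).Nonempty)
    (p₁ p₂ p₃ q₁ q₂ q₃ θ : ℝ)
    (hp₁ : 1 < p₁) (hp₂ : 1 < p₂) (hp₃ : 1 < p₃)
    (hq₁ : 1 < q₁) (hq₂ : 1 < q₂) (hq₃ : 1 < q₃) (hθ : 0 ≤ θ)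
    (C₁ C₂ : ℝ) (hC₁ : 0 < C₁) (hC₂ : 0 < C₂)
    (h1 : ∀ u v : ℝ → ℝ, grandNorm μ p₃ θ (u * v) ≤
      ENNReal.ofReal C₁ * (grandNorm μ p₁ θ u * grandNorm μ p₂ θ v))
    (h2 : ∀ u v : ℝ → ℝ, grandNorm μ q₃ θ (u * v) ≤
      ENNReal.ofReal C₂ * (grandNorm μ q₁ θ u * grandNorm μ q₂ θ v))
    (f g : ℝ → ℝ)
    (hf : wgnorm μ Q p₁ q₁ θ f < ⊤) (hg : wgnorm μ Q p₂ q₂ θ g < ⊤) :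
    wgnorm μ Q p₃ q₃ θ (f * g) < ⊤ ∧
    wgnorm μ Q p₃ q₃ θ (f * g) ≤
      ENNReal.ofReal (C₁ * C₂) * (wgnorm μ Q p₁ q₁ θ f * wgnorm μ Q p₂ q₂ θ g) := by
  set c₁ := ENNReal.ofReal C₁ with hc₁def
  have hc₁0 : c₁ ≠ 0 := by simp [hc₁def, hC₁, ENNReal.ofReal_eq_zero, not_le]
  have hc₁t : c₁ ≠ ∞ := ENNReal.ofReal_ne_top
  set F : ℝ → ℝ≥0∞ := fun x =>
    gnorm μ p₁ θ ((x +ᵥ Q).indicator fun t => ENNReal.ofReal |f t|) with hFdef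
  set G : ℝ → ℝ≥0∞ := fun x =>
    gnorm μ p₂ θ ((x +ᵥ Q).indicator fun t => ENNReal.ofReal |g t|) with hGdef
  have hwf : wgnorm μ Q p₁ q₁ θ f = gnorm μ q₁ θ F := rfl
  have hwg : wgnorm μ Q p₂ q₂ θ g = gnorm μ q₂ θ G := rfl
  have step1 : wgnorm μ Q p₃ q₃ θ (f * g) ≤
      gnorm μ q₃ θ (fun x => c₁ * (F x * G x)) := by
    refine gnorm_mono μ q₃ θ fun x => ?_
    have key := h1 ((x +ᵥ Q).indicator f) ((x +ᵥ Q).indicator g)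
    rw [← indicator_mul_split] at key
    have e3 : grandNorm μ p₃ θ ((x +ᵥ Q).indicator (f * g)) =
        gnorm μ p₃ θ ((x +ᵥ Q).indicator fun t => ENNReal.ofReal |(f * g) t|) := by
      unfold grandNorm; rw [indicator_abs_swap]
    have e1 : grandNorm μ p₁ θ ((x +ᵥ Q).indicator f) = F x := by
      unfold grandNorm; rw [indicator_abs_swap]
    have e2 : grandNorm μ p₂ θ ((x +ᵥ Q).indicator g) = G x := by
      unfold grandNorm; rw [indicator_abs_swap]
    rw [e3, e1, e2] at key
    exact key
  have main : wgnorm μ Q p₃ q₃ θ (f * g) ≤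
      ENNReal.ofReal (C₁ * C₂) * (wgnorm μ Q p₁ q₁ θ f * wgnorm μ Q p₂ q₂ θ g) := by
    refine step1.trans ?_
    refine (gnorm_trunc μ q₃ θ _).trans ?_
    refine iSup_le fun n => ?_
    set K : ℝ≥0∞ := (n : ℝ≥0∞) / c₁ with hKdef
    have hK : K ≠ ∞ := (ENNReal.div_lt_top (ENNReal.natCast_ne_top n) hc₁0).ne
    set u := tu F G K with hudef
    set v := tv F G K with hvdef
    have hmin : ∀ x, min (c₁ * (F x * G x)) (n : ℝ≥0∞) ≤
        c₁ * (ENNReal.ofReal (u x) * ENNReal.ofReal (v x)) := by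
      intro x
      have step : min (c₁ * (F x * G x)) (n : ℝ≥0∞) ≤ c₁ * min (F x * G x) K := by
        rcases le_total (F x * G x) K with h | h
        · rw [min_eq_left h]
          exact min_le_left _ _
        · rw [min_eq_right h, hKdef, ENNReal.mul_div_cancel hc₁0 hc₁t]
          exact min_le_right _ _
      exact step.trans (mul_le_mul_right (tuv_key F G hK x) _)
    calc gnorm μ q₃ θ (fun x => min (c₁ * (F x * G x)) (n : ℝ≥0∞))
        ≤ gnorm μ q₃ θ (fun x => c₁ * (ENNReal.ofReal (u x) * ENNReal.ofReal (v x))) :=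
          gnorm_mono μ q₃ θ hmin
      _ ≤ c₁ * gnorm μ q₃ θ (fun x => ENNReal.ofReal (u x) * ENNReal.ofReal (v x)) :=
          gnorm_const_mul_le μ hc₁t q₃ θ _
      _ = c₁ * grandNorm μ q₃ θ (u * v) := by
          unfold grandNorm
          congr 1
          congr 1
          funext x
          rw [Pi.mul_apply, abs_of_nonneg (mul_nonneg (tu_nonneg F G K x) (tv_nonneg F G K x)),
            ENNReal.ofReal_mul (tu_nonneg F G K x)]
      _ ≤ c₁ * (ENNReal.ofReal C₂ * (grandNorm μ q₁ θ u * grandNorm μ q₂ θ v)) :=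
          mul_le_mul_right (h2 u v) _
      _ ≤ c₁ * (ENNReal.ofReal C₂ * (gnorm μ q₁ θ F * gnorm μ q₂ θ G)) := by
          refine mul_le_mul_right (mul_le_mul_right (mul_le_mul' ?_ ?_) _) _
          · refine le_trans (le_of_eq ?_) (gnorm_mono μ q₁ θ (fun x => tu_le F G K x))
            unfold grandNorm
            congr 1
            funext x
            rw [abs_of_nonneg (tu_nonneg F G K x)]
          · refine le_trans (le_of_eq ?_) (gnorm_mono μ q₂ θ (fun x => tv_le F G K x))
            unfold grandNorm
            congr 1
            funext x
            rw [abs_of_nonneg (tv_nonneg F G K x)]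
      _ = ENNReal.ofReal (C₁ * C₂) * (wgnorm μ Q p₁ q₁ θ f * wgnorm μ Q p₂ q₂ θ g) := by
          rw [hwf, hwg, ENNReal.ofReal_mul hC₁.le, mul_assoc]
  exact ⟨lt_of_le_of_lt main (ENNReal.mul_lt_top ENNReal.ofReal_lt_top
    (ENNReal.mul_lt_top hf hg)), main⟩
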